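/- No-overshooting for local parks: Let sc be the (2, β)-score and sc' the (2, β/D)-score with D ≥ 4. Let 𝒬 be a park w.r.t. sc' and let 𝒫 be a park w.r.t. sc, all of whose member sets contain a fixed color c₀ after augmentation (i.e., consider e∘𝒫 where each set gets c₀ added). Fix J ⊆ C. If sc'_J(𝒬) ≤ 1/2, then sc'_J(𝒬 ∪ (e∘𝒫)) ≤ 1. -/
import Mathlib

open Finset

/-- The `(α,β)`-score of a color set `P` relative to `J`:
`β (αf)^{-|P \ J|}` if `J ⊆ P`, else `0`. -/
noncomputable def sc {C : Type*} [DecidableEq C] (α β : ℝ) (f : ℕ) (J P : Finset C) : ℝ :=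
  if J ⊆ P then β * (α * (f : ℝ)) ^ (-(((P \ J).card : ℤ))) else 0

/-- The score of a collection: sum of scores of its members. -/
noncomputable def scSum {C : Type*} [DecidableEq C] (α β : ℝ) (f : ℕ)
    (J : Finset C) (Ps : Finset (Finset C)) : ℝ :=
  ∑ P ∈ Ps, sc α β f J P

/-- The `J`-link of a collection: members containing `J`. -/
def link {C : Type*} [DecidableEq C] (Ps : Finset (Finset C)) (J : Finset C) :
    Finset (Finset C) :=
  Ps.filter (fun P => J ⊆ P)

/-- A park: every relative score is at most `1`. -/
def IsPark {C : Type*} [DecidableEq C] (α β : ℝ) (f : ℕ) (Ps : Finset (Finset C)) : Prop :=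
  ∀ J : Finset C, scSum α β f J Ps ≤ 1

lemma sc_nonneg {C : Type*} [DecidableEq C] {β : ℝ} (hβ : 0 ≤ β) {f : ℕ} (hf : 0 < f)
    (J P : Finset C) : 0 ≤ sc 2 β f J P := by
  unfold sc
  split
  · have : (0:ℝ) < 2 * f := by positivity
    positivity
  · exact le_rfl

lemma sc_div {C : Type*} [DecidableEq C] (β D : ℝ) (f : ℕ) (J P : Finset C) :
    sc 2 (β / D) f J P = sc 2 β f J P / D := by
  unfold sc
  split <;> ring

lemma sc_insert_le {C : Type*} [DecidableEq C] {β : ℝ} (hβ : 0 ≤ β) {f : ℕ} (hf : 0 < f)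
    (c₀ : C) (J P : Finset C) :
    sc 2 β f J (insert c₀ P) ≤ sc 2 β f J P + sc 2 β f (J.erase c₀) P := by
  have hnn1 := sc_nonneg hβ hf J P
  have hnn2 := sc_nonneg hβ hf (J.erase c₀) P
  by_cases hc : c₀ ∈ P
  · rw [Finset.insert_eq_self.mpr hc]
    linarith
  by_cases hJsub : J ⊆ insert c₀ P
  · by_cases hcJ : c₀ ∈ J
    · -- J.erase c₀ ⊆ P, and sc J (insert c₀ P) = sc (J.erase c₀) P
      have hsub : J.erase c₀ ⊆ P := by
        intro x hx
        have hx' := Finset.mem_erase.mp hx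
        rcases Finset.mem_insert.mp (hJsub hx'.2) with h | h
        · exact absurd h hx'.1
        · exact h
      have hdiff : insert c₀ P \ J = P \ J.erase c₀ := by
        ext x
        simp only [Finset.mem_sdiff, Finset.mem_insert, Finset.mem_erase]
        constructor
        · rintro ⟨h | h, hxJ⟩
          · exact absurd (h ▸ hcJ) hxJ
          · exact ⟨h, fun ⟨hne, hxJ'⟩ => hxJ hxJ'⟩
        · rintro ⟨hxP, hxE⟩
          refine ⟨Or.inr hxP, fun hxJ => hxE ⟨fun he => hc (he ▸ hxP), hxJ⟩⟩
      unfold sc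
      rw [if_pos hJsub, if_neg (fun h => hc (h hcJ)), if_pos hsub, hdiff]
      linarith
    · -- J ⊆ P; |insert c₀ P \ J| = |P \ J| + 1
      have hsub : J ⊆ P := by
        intro x hx
        rcases Finset.mem_insert.mp (hJsub hx) with h | h
        · exact absurd (h ▸ hx) hcJ
        · exact h
      have hdiff : insert c₀ P \ J = insert c₀ (P \ J) := by
        rw [Finset.insert_sdiff_of_notMem _ hcJ]
      have hcard : ((insert c₀ P \ J).card : ℤ) = ((P \ J).card : ℤ) + 1 := by
        rw [hdiff, Finset.card_insert_of_notMem (fun h => hc (Finset.mem_sdiff.mp h).1)]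
        push_cast; ring
      have hbase : (1:ℝ) ≤ 2 * f := by
        have : (1:ℝ) ≤ (f:ℝ) := by exact_mod_cast hf
        linarith
      have hmono : (2 * (f:ℝ)) ^ (-(((P \ J).card : ℤ) + 1)) ≤
          (2 * (f:ℝ)) ^ (-(((P \ J).card : ℤ))) := by
        apply zpow_le_zpow_right₀ hbase
        omega
      have hmain : sc 2 β f J (insert c₀ P) ≤ sc 2 β f J P := by
        unfold sc
        rw [if_pos hJsub, if_pos hsub, hcard]
        exact mul_le_mul_of_nonneg_left hmono hβ
      linarith
  · have h0 : sc 2 β f J (insert c₀ P) = 0 := by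
      unfold sc
      rw [if_neg hJsub]
    linarith

/-- No-overshooting for local parks. -/
theorem no_overshooting {C : Type*} [DecidableEq C] (β D : ℝ) (f : ℕ)
    (hf : 0 < f) (hβ0 : 0 < β) (hβ1 : β ≤ 1) (hD : 4 ≤ D) (c₀ : C)
    (𝒬 Ps : Finset (Finset C))
    (h𝒬 : IsPark 2 (β / D) f 𝒬) (hPs : IsPark 2 β f Ps)
    (J : Finset C) (hJ : scSum 2 (β / D) f J 𝒬 ≤ 1 / 2) :
    scSum 2 (β / D) f J (𝒬 ∪ Ps.image (insert c₀)) ≤ 1 := by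
  have hD0 : (0:ℝ) < D := by linarith
  have hβD : 0 ≤ β / D := by positivity
  -- sum over union ≤ sum over each part
  have hunion : scSum 2 (β / D) f J (𝒬 ∪ Ps.image (insert c₀)) ≤
      scSum 2 (β / D) f J 𝒬 + scSum 2 (β / D) f J (Ps.image (insert c₀)) := by
    unfold scSum
    have h := Finset.sum_union_inter (s₁ := 𝒬) (s₂ := Ps.image (insert c₀))
      (f := fun P => sc 2 (β / D) f J P)
    have hnn : 0 ≤ ∑ P ∈ 𝒬 ∩ Ps.image (insert c₀), sc 2 (β / D) f J P :=
      Finset.sum_nonneg fun P _ => sc_nonneg hβD hf J P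
    linarith
  -- image sum
  have himg : scSum 2 (β / D) f J (Ps.image (insert c₀)) ≤
      ∑ P ∈ Ps, sc 2 (β / D) f J (insert c₀ P) := by
    unfold scSum
    rw [Finset.sum_comp (fun Q => sc 2 (β / D) f J Q) (insert c₀)]
    apply Finset.sum_le_sum
    intro Q hQ
    rw [nsmul_eq_mul]
    apply le_mul_of_one_le_left (sc_nonneg hβD hf J Q)
    have : (Ps.filter fun P => insert c₀ P = Q).Nonempty := by
      obtain ⟨P, hP, hPQ⟩ := Finset.mem_image.mp hQ
      exact ⟨P, Finset.mem_filter.mpr ⟨hP, hPQ⟩⟩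
    exact_mod_cast Finset.card_pos.mpr this
  have hkey : ∑ P ∈ Ps, sc 2 (β / D) f J (insert c₀ P) ≤ 2 / D := by
    have h1 : ∑ P ∈ Ps, sc 2 (β / D) f J (insert c₀ P) ≤
        (∑ P ∈ Ps, sc 2 β f J P + ∑ P ∈ Ps, sc 2 β f (J.erase c₀) P) / D := by
      rw [← Finset.sum_add_distrib, Finset.sum_div]
      apply Finset.sum_le_sum
      intro P _
      rw [sc_div]
      have h := sc_insert_le hβ0.le hf c₀ J P
      gcongr
    have h2 := hPs J
    have h3 := hPs (J.erase c₀)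
    unfold scSum at h2 h3
    calc ∑ P ∈ Ps, sc 2 (β / D) f J (insert c₀ P)
        ≤ (∑ P ∈ Ps, sc 2 β f J P + ∑ P ∈ Ps, sc 2 β f (J.erase c₀) P) / D := h1
      _ ≤ 2 / D := by
          gcongr
          linarith
  have h2D : 2 / D ≤ 1 / 2 := by
    rw [div_le_div_iff₀ hD0 (by norm_num)]
    linarith
  linarith
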